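/- Let λ_i > 0 with Σ λ_i = 1, λ̃_i ≥ 0 with Σ λ̃_i = 1, g_i ∈ ℝ^d, g = Σ λ_i g_i, g̃ = Σ λ̃_i g_i, and suppose Σ_i λ_i ‖g_i − g‖² ≤ σ_g². Let χ² = Σ_i λ̃_i²/λ_i² and χ = Σ_i λ̃_i/λ_i. Then ‖g̃‖² ≤ 2(1 + N + χ² − 2χ) ‖g‖² + 2(N + χ² − 2χ) σ_g², where Σ_i (λ̃_i − λ_i)²/λ_i² = N + χ² − 2χ. -/

import Mathlib

/-!
Since both weight vectors sum to one, `g̃ - g = ∑ (λ̃ᵢ - λᵢ) (gᵢ - g)`. Weighted Cauchy–Schwarz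
bounds its squared norm by `(∑ (λ̃ᵢ - λᵢ)² / λᵢ) (∑ λᵢ ‖gᵢ - g‖²)`, and `λᵢ ≤ 1` lets us replace
`λᵢ` by `λᵢ²` in the first factor, which is the chi-square sum. Finally
`‖g̃‖² ≤ 2 ‖g‖² + 2 ‖g̃ - g‖²`.
-/

open Finset

section

variable {ι E : Type*} [Fintype ι]

theorem sum_sub_sq_div_sq {a b : ι → ℝ} (hb : ∀ i, b i ≠ 0) :
    ∑ i, (a i - b i) ^ 2 / b i ^ 2
      = Fintype.card ι + ∑ i, a i ^ 2 / b i ^ 2 - 2 * ∑ i, a i / b i := by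
  have expand : ∀ i, (a i - b i) ^ 2 / b i ^ 2 = a i ^ 2 / b i ^ 2 - 2 * (a i / b i) + 1 := by
    intro i
    field_simp [hb i]
    ring
  simp only [expand, sum_add_distrib, sum_sub_distrib, ← mul_sum, sum_const, card_univ,
    nsmul_eq_mul, mul_one]
  ring

theorem sum_div_le_sum_div_sq {c w : ι → ℝ} (hc : ∀ i, 0 ≤ c i) (hw : ∀ i, 0 < w i)
    (hw1 : ∀ i, w i ≤ 1) : ∑ i, c i / w i ≤ ∑ i, c i / w i ^ 2 :=
  sum_le_sum fun i _ => div_le_div_of_nonneg_left (hc i) (pow_pos (hw i) 2)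
    (pow_le_of_le_one (hw i).le (hw1 i) two_ne_zero)

variable [SeminormedAddCommGroup E] [NormedSpace ℝ E]

theorem sum_smul_sub_sum_smul_of_sum_eq {a b : ι → ℝ} (hab : ∑ i, a i = ∑ i, b i)
    (v : ι → E) (c : E) :
    ∑ i, a i • v i - ∑ i, b i • v i = ∑ i, (a i - b i) • (v i - c) := by
  simp only [sub_smul, smul_sub, sum_sub_distrib, ← sum_smul, hab]
  abel

theorem norm_sum_smul_sq_le {w : ι → ℝ} (hw : ∀ i, 0 < w i) (c : ι → ℝ) (v : ι → E) :
    ‖∑ i, c i • v i‖ ^ 2 ≤ (∑ i, c i ^ 2 / w i) * ∑ i, w i * ‖v i‖ ^ 2 := by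
  have hnorm : ‖∑ i, c i • v i‖ ≤ ∑ i, |c i| * ‖v i‖ :=
    (norm_sum_le _ _).trans_eq (by simp only [norm_smul, Real.norm_eq_abs])
  calc ‖∑ i, c i • v i‖ ^ 2 ≤ (∑ i, |c i| * ‖v i‖) ^ 2 := by gcongr
    _ ≤ (∑ i, c i ^ 2 / w i) * ∑ i, w i * ‖v i‖ ^ 2 := by
      refine sum_sq_le_sum_mul_sum_of_sq_le_mul _ (fun i _ => by positivity [hw i])
        (fun i _ => by positivity [hw i]) fun i _ => le_of_eq ?_
      field_simp [(hw i).ne']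
      rw [sq_abs, mul_comm]

theorem norm_sum_smul_sub_sum_smul_sq_le {w w' : ι → ℝ} (hw : ∀ i, 0 < w i)
    (hsum : ∑ i, w i = 1) (hsum' : ∑ i, w' i = 1) (v : ι → E) :
    ‖∑ i, w' i • v i - ∑ i, w i • v i‖ ^ 2
      ≤ (∑ i, (w' i - w i) ^ 2 / w i ^ 2) * ∑ i, w i * ‖v i - ∑ j, w j • v j‖ ^ 2 := by
  have hw1 : ∀ i, w i ≤ 1 := fun i =>
    hsum ▸ single_le_sum (fun j _ => (hw j).le) (mem_univ i)
  rw [sum_smul_sub_sum_smul_of_sum_eq (hsum'.trans hsum.symm) v (∑ j, w j • v j)]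
  exact (norm_sum_smul_sq_le hw _ _).trans <| mul_le_mul_of_nonneg_right
    (sum_div_le_sum_div_sq (fun i => sq_nonneg _) hw hw1)
    (sum_nonneg fun i _ => mul_nonneg (hw i).le (sq_nonneg _))

end

theorem stmt_10_general {d N : ℕ} (lam tlam : Fin N → ℝ)
    (hlam : ∀ i, 0 < lam i) (hsum : ∑ i, lam i = 1)
    (htsum : ∑ i, tlam i = 1)
    (g : Fin N → EuclideanSpace ℝ (Fin d))
    (gbar tgbar : EuclideanSpace ℝ (Fin d))
    (hgbar : gbar = ∑ i, lam i • g i) (htgbar : tgbar = ∑ i, tlam i • g i)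
    (σg : ℝ)
    (hvar : ∑ i, lam i * ‖g i - gbar‖ ^ 2 ≤ σg ^ 2)
    (χsq χ : ℝ) (hχsq : χsq = ∑ i, tlam i ^ 2 / lam i ^ 2)
    (hχ : χ = ∑ i, tlam i / lam i) :
    ‖tgbar‖ ^ 2 ≤ 2 * (1 + N + χsq - 2 * χ) * ‖gbar‖ ^ 2
        + 2 * (N + χsq - 2 * χ) * σg ^ 2 ∧
      ∑ i, (tlam i - lam i) ^ 2 / lam i ^ 2 = N + χsq - 2 * χ := by
  have hdiv : ∑ i, (tlam i - lam i) ^ 2 / lam i ^ 2 = N + χsq - 2 * χ := by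
    rw [sum_sub_sq_div_sq fun i => (hlam i).ne', Fintype.card_fin, hχsq, hχ]
  refine ⟨?_, hdiv⟩
  rw [show (1 : ℝ) + N + χsq - 2 * χ = 1 + (N + χsq - 2 * χ) by ring, ← hdiv]
  set S := ∑ i, (tlam i - lam i) ^ 2 / lam i ^ 2
  have hS : 0 ≤ S := sum_nonneg fun i _ => by positivity
  have hshift : ‖tgbar - gbar‖ ^ 2 ≤ S * σg ^ 2 := by
    have h := norm_sum_smul_sub_sum_smul_sq_le hlam hsum htsum g
    rw [← hgbar, ← htgbar] at h
    exact h.trans (mul_le_mul_of_nonneg_left hvar hS)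
  calc ‖tgbar‖ ^ 2 = ‖gbar + (tgbar - gbar)‖ ^ 2 := by rw [add_sub_cancel]
    _ ≤ 2 * (‖gbar‖ ^ 2 + ‖tgbar - gbar‖ ^ 2) :=
      (pow_le_pow_left₀ (norm_nonneg _) (norm_add_le _ _) 2).trans add_sq_le
    _ ≤ 2 * (1 + S) * ‖gbar‖ ^ 2 + 2 * S * σg ^ 2 := by nlinarith [sq_nonneg ‖gbar‖]

theorem stmt_10 {d N : ℕ} (lam tlam : Fin N → ℝ)
    (hlam : ∀ i, 0 < lam i) (hsum : ∑ i, lam i = 1)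
    (htlam : ∀ i, 0 ≤ tlam i) (htsum : ∑ i, tlam i = 1)
    (g : Fin N → EuclideanSpace ℝ (Fin d))
    (gbar tgbar : EuclideanSpace ℝ (Fin d))
    (hgbar : gbar = ∑ i, lam i • g i) (htgbar : tgbar = ∑ i, tlam i • g i)
    (σg : ℝ) (hσg : 0 ≤ σg)
    (hvar : ∑ i, lam i * ‖g i - gbar‖ ^ 2 ≤ σg ^ 2)
    (χsq χ : ℝ) (hχsq : χsq = ∑ i, tlam i ^ 2 / lam i ^ 2)
    (hχ : χ = ∑ i, tlam i / lam i) :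
    ‖tgbar‖ ^ 2 ≤ 2 * (1 + N + χsq - 2 * χ) * ‖gbar‖ ^ 2
        + 2 * (N + χsq - 2 * χ) * σg ^ 2 ∧
      ∑ i, (tlam i - lam i) ^ 2 / lam i ^ 2 = N + χsq - 2 * χ :=
  stmt_10_general lam tlam hlam hsum htsum g gbar tgbar hgbar htgbar σg hvar χsq χ hχsq hχ
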